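/- Fix reals α > 0 and 0 < β < 1 and an integer l ≥ 1, define τ(d, q) = 1 if q divides d^l and τ(d, q) = max{−α r^{−β}, −1} otherwise (r = q / gcd(q, d^l)), and set λ = 2^{−β}. There exists a constant c_2 > 0 depending only on α and β such that for every positive integer s and every prime p ≤ 2^s there exist integers 0 = a_0 ≤ a_1 ≤ ... ≤ a_s such that p^{a_s} < 2^{c_2 s} and, for every positive integer k, ∑_{j=0}^{s} λ^j τ(p^{a_j}, p^k) ≥ −((1 + α)/(1 − λ)) λ^{s+1}. -/

import Mathlib

/-- `τ(d, q) = 1` if `q ∣ d^l`, and `max{−a r^{−b}, −1}` otherwise, where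
`r = q / gcd(q, d^l)`. -/
noncomputable def tau (a b : ℝ) (l d q : ℕ) : ℝ :=
  if q ∣ d ^ l then 1
  else max (-(a * ((q / Nat.gcd q (d ^ l) : ℕ) : ℝ) ^ (-b))) (-1)

/-! With `λ = 2^{-b} ∈ (1/2, 1)` and `m = ⌈log₂ p⌉`, take the exponents `e_j = ⌊c j / m⌋` for a
large constant `c`, so that `p^{e_j}` grows like `2^{c j}`. For a given `k`, let `n ≤ s` be the
last index with `l e_n < k`. The terms after `n` equal `1` and contribute
`(λ^{n+1} - λ^{s+1}) / (1 - λ)`. The term at `n` is at least `-1`, and for `j < n` the quotient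
`r = p^{k - l e_j}` satisfies `r² ≥ 2^{c (n - j)}`, so `τ ≥ -a μ^{n-j}` with `μ = 2^{-b c / 2}`.
Once `c` is so large that `1 + a μ / (λ - μ) ≤ λ / (1 - λ)`, the terms up to `n` add up to at
least `-λ^{n+1} / (1 - λ)`, and the whole sum is at least `-λ^{s+1} / (1 - λ)`. -/

open Finset Filter Topology

section Tau

variable (a b : ℝ) (l : ℕ)

lemma neg_one_le_tau (d q : ℕ) : -1 ≤ tau a b l d q := by
  unfold tau
  split_ifs
  · norm_num
  · exact le_max_right _ _

lemma tau_pow_eq_one {p e k : ℕ} (h : k ≤ e * l) : tau a b l (p ^ e) (p ^ k) = 1 := by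
  rw [tau, if_pos (by rw [← pow_mul]; exact pow_dvd_pow p h)]

lemma neg_mul_rpow_le_tau_pow {p e k : ℕ} (hp : 1 < p) (h : e * l < k) :
    -(a * ((p ^ (k - e * l) : ℕ) : ℝ) ^ (-b)) ≤ tau a b l (p ^ e) (p ^ k) := by
  have hndvd : ¬ p ^ k ∣ (p ^ e) ^ l := by
    rw [← pow_mul, Nat.pow_dvd_pow_iff_le_right hp]
    omega
  have hgcd : Nat.gcd (p ^ k) ((p ^ e) ^ l) = p ^ (e * l) := by
    rw [← pow_mul, Nat.gcd_comm, Nat.gcd_eq_left (pow_dvd_pow p h.le)]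
  rw [tau, if_neg hndvd, hgcd, Nat.pow_div h.le (by omega)]
  exact le_max_left _ _

end Tau

lemma two_pow_clog_le_sq {n : ℕ} (hn : 0 < n) : 2 ^ Nat.clog 2 n ≤ n ^ 2 := by
  rcases Nat.lt_or_ge 1 n with hn1 | hn1
  · have hlt := Nat.pow_pred_clog_lt_self one_lt_two hn1
    have hpos := Nat.clog_pos one_lt_two hn1
    calc 2 ^ Nat.clog 2 n = 2 * 2 ^ (Nat.clog 2 n - 1) := by
          rw [← pow_succ', Nat.sub_add_cancel hpos]
      _ ≤ n * n := Nat.mul_le_mul hn1 hlt.le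
      _ = n ^ 2 := (sq n).symm
  · obtain rfl : n = 1 := by omega
    simp

lemma rpow_neg_le_of_two_pow_le_sq {x b : ℝ} {N : ℕ} (hx : 0 ≤ x) (hb : 0 ≤ b)
    (h : (2 : ℝ) ^ N ≤ x ^ 2) : x ^ (-b) ≤ ((2 : ℝ) ^ (-b / 2)) ^ N := calc
  x ^ (-b) = (x ^ 2) ^ (-b / 2) := by
    rw [← Real.rpow_natCast_mul hx]
    ring_nf
  _ ≤ ((2 : ℝ) ^ N) ^ (-b / 2) := Real.rpow_le_rpow_of_nonpos (by positivity) h (by linarith)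
  _ = ((2 : ℝ) ^ (-b / 2)) ^ N := (Real.rpow_pow_comm zero_le_two _ _).symm

lemma sum_pow_mul_pow_sub_le {lam μ : ℝ} (hμ0 : 0 ≤ μ) (hμ : μ < lam) (n : ℕ) :
    ∑ j ∈ range n, lam ^ j * μ ^ (n - j) ≤ lam ^ n * μ / (lam - μ) := by
  have hgeom : ∑ j ∈ range n, lam ^ j * μ ^ (n - j)
      = μ * (∑ j ∈ range n, lam ^ j * μ ^ (n - 1 - j)) := by
    rw [mul_sum]
    refine sum_congr rfl fun j hj => ?_
    rw [show n - j = n - 1 - j + 1 by have := mem_range.1 hj; omega, pow_succ]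
    ring
  rw [hgeom, le_div_iff₀ (by linarith), mul_assoc, geom_sum₂_mul]
  nlinarith [pow_nonneg hμ0 n, pow_nonneg (hμ0.trans hμ.le) n]

lemma neg_div_le_sum_pow_mul {lam μ A : ℝ} (hlam : lam < 1) (hμ0 : 0 ≤ μ) (hμ : μ < lam)
    (hA : 0 ≤ A) (hAμ : 1 + A * μ / (lam - μ) ≤ lam / (1 - lam)) {t : ℕ → ℝ} {n s : ℕ}
    (hns : n ≤ s) (ht_one : ∀ j, n < j → j ≤ s → t j = 1) (ht_n : -1 ≤ t n)
    (ht_lt : ∀ j < n, -(A * μ ^ (n - j)) ≤ t j) :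
    -(lam ^ (s + 1) / (1 - lam)) ≤ ∑ j ∈ range (s + 1), lam ^ j * t j := by
  have hlam0 : 0 < lam := hμ0.trans_lt hμ
  have hbefore : -(A * (lam ^ n * μ / (lam - μ))) ≤ ∑ j ∈ range n, lam ^ j * t j := calc
    -(A * (lam ^ n * μ / (lam - μ))) ≤ ∑ j ∈ range n, lam ^ j * -(A * μ ^ (n - j)) := by
      rw [neg_le, ← sum_neg_distrib]
      simp only [mul_neg, neg_neg, mul_left_comm _ A, ← mul_sum]
      exact mul_le_mul_of_nonneg_left (sum_pow_mul_pow_sub_le hμ0 hμ n) hA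
    _ ≤ ∑ j ∈ range n, lam ^ j * t j :=
      sum_le_sum fun j hj => mul_le_mul_of_nonneg_left (ht_lt j (mem_range.1 hj)) (by positivity)
  have hhead : -(lam ^ (n + 1) / (1 - lam)) ≤ ∑ j ∈ range (n + 1), lam ^ j * t j := by
    have hpow : 0 ≤ lam ^ n := by positivity
    have hlast : -lam ^ n ≤ lam ^ n * t n := by nlinarith
    have hbound := mul_le_mul_of_nonneg_left hAμ hpow
    have hsplit : lam ^ n * (1 + A * μ / (lam - μ)) = lam ^ n + A * (lam ^ n * μ / (lam - μ)) := by
      ring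
    have hpow_succ : lam ^ n * (lam / (1 - lam)) = lam ^ (n + 1) / (1 - lam) := by ring
    rw [sum_range_succ]
    linarith
  have htail : ∑ j ∈ Ico (n + 1) (s + 1), lam ^ j * t j
      = (lam ^ (n + 1) - lam ^ (s + 1)) / (1 - lam) := by
    rw [← geom_sum_Ico' hlam.ne (by omega : n + 1 ≤ s + 1)]
    refine sum_congr rfl fun j hj => ?_
    rw [mem_Ico] at hj
    rw [ht_one j (by omega) (by omega), mul_one]
  rw [← sum_range_add_sum_Ico _ (by omega : n + 1 ≤ s + 1), htail]
  have hsum : -(lam ^ (s + 1) / (1 - lam))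
      = -(lam ^ (n + 1) / (1 - lam)) + (lam ^ (n + 1) - lam ^ (s + 1)) / (1 - lam) := by
    ring
  linarith

lemma neg_mul_pow_le_tau_pow_div {a b : ℝ} (ha : 0 ≤ a) (hb : 0 ≤ b) {l p c m j n k : ℕ}
    (hl : 1 ≤ l) (hp : 1 < p) (hm0 : 0 < m) (hm : 2 ^ m ≤ p ^ 2) (hjn : j ≤ n)
    (hn : l * (c * n / m) < k) :
    -(a * (((2 : ℝ) ^ (-b / 2)) ^ c) ^ (n - j)) ≤ tau a b l (p ^ (c * j / m)) (p ^ k) := by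
  set u := c * j / m
  set v := c * n / m
  have huv : u ≤ v := Nat.div_le_div_right (Nat.mul_le_mul_left c hjn)
  have hvk : v * l < k := by rwa [mul_comm]
  have hul : u * l < k := lt_of_le_of_lt (Nat.mul_le_mul_right l huv) hvk
  set D := k - u * l
  have hexp : c * (n - j) ≤ m * D := by
    have hDge : v + 1 - u ≤ D := by
      have h1 : v - u ≤ (v - u) * l := Nat.le_mul_of_pos_right _ hl
      have h2 : (v - u) * l = v * l - u * l := Nat.sub_mul _ _ _
      omega
    have hmD := Nat.mul_le_mul_left m hDge
    have hu : m * u ≤ c * j := Nat.mul_div_le _ _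
    have hv : c * n < m * (v + 1) := Nat.lt_mul_div_succ _ hm0
    have hcj : c * j ≤ c * n := Nat.mul_le_mul_left c hjn
    rw [Nat.mul_sub] at hmD ⊢
    omega
  have hsq : (2 : ℝ) ^ (c * (n - j)) ≤ ((p ^ D : ℕ) : ℝ) ^ 2 := by
    have : 2 ^ (c * (n - j)) ≤ (p ^ D) ^ 2 := calc
      2 ^ (c * (n - j)) ≤ 2 ^ (m * D) := Nat.pow_le_pow_right two_pos hexp
      _ = (2 ^ m) ^ D := pow_mul _ _ _
      _ ≤ (p ^ 2) ^ D := Nat.pow_le_pow_left hm D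
      _ = (p ^ D) ^ 2 := by ring
    exact_mod_cast this
  have hrpow := rpow_neg_le_of_two_pow_le_sq (Nat.cast_nonneg _) hb hsq
  rw [pow_mul] at hrpow
  exact le_trans (neg_le_neg (mul_le_mul_of_nonneg_left hrpow ha))
    (neg_mul_rpow_le_tau_pow a b l hp hul)

lemma pow_div_clog_lt (p c : ℕ) {s : ℕ} (hs : 1 ≤ s) :
    (p : ℝ) ^ (c * s / Nat.clog 2 p) < (2 : ℝ) ^ (((c : ℝ) + 1) * s) := by
  set m := Nat.clog 2 p
  have hnat : p ^ (c * s / m) < 2 ^ ((c + 1) * s) := calc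
    p ^ (c * s / m) ≤ (2 ^ m) ^ (c * s / m) := Nat.pow_le_pow_left (Nat.le_pow_clog one_lt_two p) _
    _ = 2 ^ (m * (c * s / m)) := (pow_mul _ _ _).symm
    _ ≤ 2 ^ (c * s) := Nat.pow_le_pow_right two_pos (Nat.mul_div_le _ _)
    _ < 2 ^ ((c + 1) * s) := Nat.pow_lt_pow_right one_lt_two (by nlinarith)
  have hcast : (2 : ℝ) ^ (((c : ℝ) + 1) * s) = ((2 ^ ((c + 1) * s) : ℕ) : ℝ) := by
    push_cast
    rw [← Real.rpow_natCast]
    push_cast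
    rfl
  rw [hcast]
  exact_mod_cast hnat

lemma exists_pow_lt_and_one_add_le {ν lam a : ℝ} (hν0 : 0 ≤ ν) (hν1 : ν < 1) (hlam : 1 / 2 < lam)
    (hlam1 : lam < 1) : ∃ c : ℕ, ν ^ c < lam ∧ 1 + a * ν ^ c / (lam - ν ^ c) ≤ lam / (1 - lam) := by
  have hpow := tendsto_pow_atTop_nhds_zero_of_lt_one hν0 hν1
  have hbound : Tendsto (fun c : ℕ => 1 + a * ν ^ c / (lam - ν ^ c)) atTop (𝓝 1) := by
    simpa using ((hpow.const_mul a).div (tendsto_const_nhds.sub hpow) (by linarith)).const_add 1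
  have h1 : 1 < lam / (1 - lam) := by rw [one_lt_div (by linarith)]; linarith
  obtain ⟨c, hc, hc'⟩ := ((hpow.eventually (gt_mem_nhds (show (0 : ℝ) < lam by linarith))).and
    (hbound.eventually (gt_mem_nhds h1))).exists
  exact ⟨c, hc, hc'.le⟩

/-- With `λ = 2^{−b}`, there is `c₂ > 0` depending only on `a, b`
such that for every `s ≥ 1` and prime `p ≤ 2^s` there are exponents
`0 = a₀ ≤ a₁ ≤ ... ≤ a_s` with `p^{a_s} < 2^{c₂ s}` and, for every `k ≥ 1`,
`∑_{j=0}^{s} λ^j τ(p^{a_j}, p^k) ≥ −((1 + a)/(1 − λ)) λ^{s+1}`. -/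
theorem stmt_16 (a b : ℝ) (l : ℕ) (ha : 0 < a) (hb0 : 0 < b) (hb1 : b < 1) (hl : 1 ≤ l) :
    ∃ c2 : ℝ, 0 < c2 ∧ ∀ s : ℕ, 1 ≤ s → ∀ p : ℕ, p.Prime → p ≤ 2 ^ s →
      ∃ e : ℕ → ℕ, e 0 = 0 ∧ (∀ j, j < s → e j ≤ e (j + 1)) ∧
        (p : ℝ) ^ (e s) < (2 : ℝ) ^ (c2 * (s : ℝ)) ∧
        ∀ k : ℕ, 1 ≤ k →
          -((1 + a) / (1 - (2 : ℝ) ^ (-b)) * ((2 : ℝ) ^ (-b)) ^ (s + 1)) ≤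
            ∑ j ∈ Finset.range (s + 1),
              ((2 : ℝ) ^ (-b)) ^ j * tau a b l (p ^ (e j)) (p ^ k) := by
  set lam : ℝ := (2 : ℝ) ^ (-b)
  have hlam1 : lam < 1 := Real.rpow_lt_one_of_one_lt_of_neg one_lt_two (by linarith)
  have hlam : 1 / 2 < lam := by
    simpa [Real.rpow_neg_one] using
      Real.rpow_lt_rpow_of_exponent_lt one_lt_two (by linarith : (-1 : ℝ) < -b)
  obtain ⟨c, hcμ, hc⟩ := exists_pow_lt_and_one_add_le (a := a) (Real.rpow_nonneg zero_le_two _)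
    (Real.rpow_lt_one_of_one_lt_of_neg one_lt_two (by linarith : -b / 2 < 0)) hlam hlam1
  refine ⟨c + 1, by positivity, fun s hs p hp _ => ?_⟩
  set m := Nat.clog 2 p
  refine ⟨fun j => c * j / m, by simp, fun j _ => Nat.div_le_div_right (by gcongr; omega),
    pow_div_clog_lt p c hs, fun k hk => ?_⟩
  set P : ℕ → Prop := fun j => l * (c * j / m) < k
  set n := Nat.findGreatest P s
  have hn : l * (c * n / m) < k :=
    Nat.findGreatest_spec (P := P) (Nat.zero_le s) (by simp [P]; omega)
  calc -((1 + a) / (1 - lam) * lam ^ (s + 1)) ≤ -(lam ^ (s + 1) / (1 - lam)) := by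
        rw [neg_le_neg_iff, div_mul_eq_mul_div]
        exact div_le_div_of_nonneg_right (le_mul_of_one_le_left (by positivity) (by linarith))
          (by linarith)
    _ ≤ _ := neg_div_le_sum_pow_mul hlam1 (by positivity) hcμ ha.le hc (Nat.findGreatest_le s)
        (fun j hnj hjs => tau_pow_eq_one a b l
          (by rw [mul_comm]; exact not_lt.mp (Nat.findGreatest_is_greatest (P := P) hnj hjs)))
        (neg_one_le_tau a b l _ _)
        (fun j hj => neg_mul_pow_le_tau_pow_div ha.le hb0.le hl hp.one_lt
          (Nat.clog_pos one_lt_two hp.two_le) (two_pow_clog_le_sq hp.pos) hj.le hn)
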